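/- arXiv:2510.14641 — 3 statements merged into one kernel-verified Lean document; each statement's English description precedes it below -/
import Mathlib

section
/- Let (x, y) be a random pair with y ∈ {0,1}, and let s ∈ {0,1} satisfy s ⟂ y given the event and P(s=1|y=0)=0. For a model f : X → (0,1), the expectation over (x, s) of the corrected loss h(x,s)·(-log f(x)) + (1-h(x,s))·(-log(1-f(x))), where h(x,s) = P(y=1|x,s), equals the expectation over (x,y) of the ideal full-information loss y·(-log f(x)) + (1-y)·(-log(1-f(x))). -/
open Finset

theorem stmt4_key {Ω α : Type*} [Fintype Ω] [DecidableEq α]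
    (w : Ω → ℝ)
    (X : Ω → α) (Y S : Ω → Bool)
    (h : α → Bool → ℝ)
    (hh : ∀ a s, h a s * (∑ ω ∈ univ.filter (fun ω => X ω = a ∧ S ω = s), w ω)
        = ∑ ω ∈ univ.filter (fun ω => X ω = a ∧ S ω = s ∧ Y ω = true), w ω)
    (g : α → ℝ) :
    ∑ ω, w ω * (h (X ω) (S ω) * g (X ω))
      = ∑ ω, w ω * ((if Y ω then (1:ℝ) else 0) * g (X ω)) := by
  classical
  set T : Finset (α × Bool) := univ.image (fun ω => (X ω, S ω)) with hT
  have hmaps : ∀ ω ∈ (univ : Finset Ω), (X ω, S ω) ∈ T :=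
    fun ω _ => Finset.mem_image_of_mem _ (Finset.mem_univ ω)
  rw [← Finset.sum_fiberwise_of_maps_to hmaps (fun ω => w ω * (h (X ω) (S ω) * g (X ω))),
      ← Finset.sum_fiberwise_of_maps_to hmaps
        (fun ω => w ω * ((if Y ω then (1:ℝ) else 0) * g (X ω)))]
  refine Finset.sum_congr rfl fun p _ => ?_
  obtain ⟨a, s⟩ := p
  have hfib : (univ.filter (fun ω => (X ω, S ω) = (a, s)))
      = univ.filter (fun ω => X ω = a ∧ S ω = s) := by
    apply Finset.filter_congr
    intro ω _
    simp [Prod.ext_iff]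
  rw [hfib]
  have hl : ∑ ω ∈ univ.filter (fun ω => X ω = a ∧ S ω = s),
      w ω * (h (X ω) (S ω) * g (X ω))
      = (h a s * (∑ ω ∈ univ.filter (fun ω => X ω = a ∧ S ω = s), w ω)) * g a := by
    have step : ∀ ω ∈ univ.filter (fun ω => X ω = a ∧ S ω = s),
        w ω * (h (X ω) (S ω) * g (X ω)) = (h a s * g a) * w ω := by
      intro ω hω
      rw [Finset.mem_filter] at hω
      obtain ⟨-, ha, hs⟩ := hω
      rw [ha, hs]; ring
    rw [Finset.sum_congr rfl step, ← Finset.mul_sum]; ring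
  have hr : ∑ ω ∈ univ.filter (fun ω => X ω = a ∧ S ω = s),
      w ω * ((if Y ω then (1:ℝ) else 0) * g (X ω))
      = (∑ ω ∈ univ.filter (fun ω => X ω = a ∧ S ω = s ∧ Y ω = true), w ω) * g a := by
    have hset : univ.filter (fun ω => X ω = a ∧ S ω = s ∧ Y ω = true)
        = (univ.filter (fun ω => X ω = a ∧ S ω = s)).filter (fun ω => Y ω = true) := by
      ext ω; simp [and_assoc]
    have step : ∀ ω ∈ univ.filter (fun ω => X ω = a ∧ S ω = s),
        w ω * ((if Y ω then (1:ℝ) else 0) * g (X ω))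
        = (if Y ω = true then w ω else 0) * g a := by
      intro ω hω
      rw [Finset.mem_filter] at hω
      obtain ⟨-, ha, hs⟩ := hω
      cases hY : Y ω <;> simp [ha]
    rw [hset, Finset.sum_congr rfl step, ← Finset.sum_mul, ← Finset.sum_filter]
  rw [hl, hr, hh]

/-- unbiasedness of the Partial Label Causal Loss. On a finite probability
space with weights `w`, features `X`, true causal label `Y`, selection label `S` with
`S = 1 ⟹ Y = 1`, and corrected label `h a s = P(y=1 | X=a, S=s)` (characterized by
`h a s · P(X=a, S=s) = P(Y=1, X=a, S=s)`), for any fixed model `f : α → (0,1)` the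
expectation of the corrected loss equals the expectation of the ideal full-information
loss. -/
theorem stmt4 {Ω α : Type*} [Fintype Ω] [DecidableEq α]
    (w : Ω → ℝ) (hw : ∀ ω, 0 ≤ w ω) (hw1 : ∑ ω, w ω = 1)
    (X : Ω → α) (Y S : Ω → Bool)
    (hSY : ∀ ω, S ω = true → Y ω = true)
    (h : α → Bool → ℝ)
    (hh : ∀ a s, h a s * (∑ ω ∈ univ.filter (fun ω => X ω = a ∧ S ω = s), w ω)
        = ∑ ω ∈ univ.filter (fun ω => X ω = a ∧ S ω = s ∧ Y ω = true), w ω)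
    (f : α → ℝ) (hf : ∀ a, f a ∈ Set.Ioo (0:ℝ) 1) :
    ∑ ω, w ω * (h (X ω) (S ω) * (-Real.log (f (X ω)))
        + (1 - h (X ω) (S ω)) * (-Real.log (1 - f (X ω))))
      = ∑ ω, w ω * ((if Y ω then (1:ℝ) else 0) * (-Real.log (f (X ω)))
        + (1 - (if Y ω then (1:ℝ) else 0)) * (-Real.log (1 - f (X ω)))) := by
  classical
  have key := stmt4_key w X Y S h hh
    (fun a => -Real.log (f a) + Real.log (1 - f a))
  have e1 : ∀ (c : ℝ) (ω : Ω),
      w ω * (c * (-Real.log (f (X ω))) + (1 - c) * (-Real.log (1 - f (X ω))))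
      = w ω * (c * (-Real.log (f (X ω)) + Real.log (1 - f (X ω))))
        + w ω * (-Real.log (1 - f (X ω))) := by
    intro c ω; ring
  calc ∑ ω, w ω * (h (X ω) (S ω) * (-Real.log (f (X ω)))
        + (1 - h (X ω) (S ω)) * (-Real.log (1 - f (X ω))))
      = ∑ ω, (w ω * (h (X ω) (S ω) * (-Real.log (f (X ω)) + Real.log (1 - f (X ω))))
          + w ω * (-Real.log (1 - f (X ω)))) := by
        exact Finset.sum_congr rfl fun ω _ => e1 _ ω
    _ = (∑ ω, w ω * (h (X ω) (S ω) * (-Real.log (f (X ω)) + Real.log (1 - f (X ω)))))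
          + ∑ ω, w ω * (-Real.log (1 - f (X ω))) := Finset.sum_add_distrib
    _ = (∑ ω, w ω * ((if Y ω then (1:ℝ) else 0) * (-Real.log (f (X ω)) + Real.log (1 - f (X ω)))))
          + ∑ ω, w ω * (-Real.log (1 - f (X ω))) := by rw [key]
    _ = ∑ ω, (w ω * ((if Y ω then (1:ℝ) else 0) * (-Real.log (f (X ω)) + Real.log (1 - f (X ω))))
          + w ω * (-Real.log (1 - f (X ω)))) := Finset.sum_add_distrib.symm
    _ = ∑ ω, w ω * ((if Y ω then (1:ℝ) else 0) * (-Real.log (f (X ω)))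
        + (1 - (if Y ω then (1:ℝ) else 0)) * (-Real.log (1 - f (X ω)))) := by
        exact Finset.sum_congr rfl fun ω _ => (e1 _ ω).symm
end

section
/- With s=1 implying y=1, the expectation over (x, y, s) of -log P(s | x, y; e) for a propensity model e equals the expectation over (x, s) of h(x,s)·[s·(-log e(x)) + (1-s)·(-log(1-e(x)))], where h(x,s) = P(y=1|x,s), using the convention that P(s=0|x,y=0)=1 contributes zero loss. -/
open Finset

/-- the expectation over `(x,y,s)` of `-log P(s | x, y; e)` for a propensity
model `e` (with the convention that the deterministic case `y = 0`, `s = 0` contributes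
zero loss) equals the expectation over `(x,s)` of
`h(x,s)·[s·(-log e(x)) + (1-s)·(-log(1-e(x)))]`, where `h(x,s) = P(y=1|x,s)`. -/
theorem stmt5 {Ω α : Type*} [Fintype Ω] [DecidableEq α]
    (w : Ω → ℝ) (hw : ∀ ω, 0 ≤ w ω) (hw1 : ∑ ω, w ω = 1)
    (X : Ω → α) (Y S : Ω → Bool)
    (hSY : ∀ ω, S ω = true → Y ω = true)
    (h : α → Bool → ℝ)
    (hh : ∀ a s, h a s * (∑ ω ∈ univ.filter (fun ω => X ω = a ∧ S ω = s), w ω)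
        = ∑ ω ∈ univ.filter (fun ω => X ω = a ∧ S ω = s ∧ Y ω = true), w ω)
    (e : α → ℝ) (he : ∀ a, e a ∈ Set.Ioo (0:ℝ) 1) :
    ∑ ω, w ω * (if Y ω then
        (if S ω then -Real.log (e (X ω)) else -Real.log (1 - e (X ω))) else 0)
      = ∑ ω, w ω * (h (X ω) (S ω) *
        (if S ω then -Real.log (e (X ω)) else -Real.log (1 - e (X ω)))) := by
  classical
  set L : α → Bool → ℝ := fun a s => if s then -Real.log (e a) else -Real.log (1 - e a)
    with hL
  have key : ∀ (a : α) (s : Bool),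
      (∑ ω ∈ univ.filter (fun ω => X ω = a ∧ S ω = s),
          w ω * (if Y ω then L a s else 0))
      = ∑ ω ∈ univ.filter (fun ω => X ω = a ∧ S ω = s), w ω * (h a s * L a s) := by
    intro a s
    have hset : univ.filter (fun ω => X ω = a ∧ S ω = s ∧ Y ω = true)
        = (univ.filter (fun ω => X ω = a ∧ S ω = s)).filter (fun ω => Y ω = true) := by
      rw [Finset.filter_filter]; ext ω; simp [and_assoc]
    have h1 : (∑ ω ∈ univ.filter (fun ω => X ω = a ∧ S ω = s),
          w ω * (if Y ω then L a s else 0))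
        = ∑ ω ∈ univ.filter (fun ω => X ω = a ∧ S ω = s ∧ Y ω = true), w ω * L a s := by
      rw [hset]
      conv_rhs => rw [Finset.sum_filter]
      refine Finset.sum_congr rfl fun ω _ => ?_
      by_cases hy : Y ω <;> simp [hy]
    rw [h1, ← Finset.sum_mul, ← hh]
    simp only [Finset.mul_sum, Finset.sum_mul]
    exact Finset.sum_congr rfl fun ω _ => by ring
  calc ∑ ω, w ω * (if Y ω then L (X ω) (S ω) else 0)
      = ∑ p ∈ (univ : Finset Ω).image (fun ω => (X ω, S ω)),
          ∑ ω ∈ univ.filter (fun ω => (X ω, S ω) = p),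
            w ω * (if Y ω then L (X ω) (S ω) else 0) := by
        rw [Finset.sum_fiberwise_of_maps_to]
        intro ω _; exact Finset.mem_image_of_mem _ (Finset.mem_univ ω)
    _ = ∑ p ∈ (univ : Finset Ω).image (fun ω => (X ω, S ω)),
          ∑ ω ∈ univ.filter (fun ω => (X ω, S ω) = p),
            w ω * (h (X ω) (S ω) * L (X ω) (S ω)) := by
        refine Finset.sum_congr rfl fun p _ => ?_
        have hfe : (univ.filter (fun ω => (X ω, S ω) = p))
            = univ.filter (fun ω => X ω = p.1 ∧ S ω = p.2) := by
          apply Finset.filter_congr; intro ω _; simp [Prod.ext_iff]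
        rw [hfe]
        have := key p.1 p.2
        calc (∑ ω ∈ univ.filter (fun ω => X ω = p.1 ∧ S ω = p.2),
              w ω * (if Y ω then L (X ω) (S ω) else 0))
            = ∑ ω ∈ univ.filter (fun ω => X ω = p.1 ∧ S ω = p.2),
              w ω * (if Y ω then L p.1 p.2 else 0) := by
              refine Finset.sum_congr rfl fun ω hω => ?_
              simp only [Finset.mem_filter] at hω
              rw [hω.2.1, hω.2.2]
          _ = ∑ ω ∈ univ.filter (fun ω => X ω = p.1 ∧ S ω = p.2),
              w ω * (h p.1 p.2 * L p.1 p.2) := key p.1 p.2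
          _ = ∑ ω ∈ univ.filter (fun ω => X ω = p.1 ∧ S ω = p.2),
              w ω * (h (X ω) (S ω) * L (X ω) (S ω)) := by
              refine Finset.sum_congr rfl fun ω hω => ?_
              simp only [Finset.mem_filter] at hω
              rw [hω.2.1, hω.2.2]
    _ = ∑ ω, w ω * (h (X ω) (S ω) * L (X ω) (S ω)) := by
        rw [Finset.sum_fiberwise_of_maps_to]
        intro ω _; exact Finset.mem_image_of_mem _ (Finset.mem_univ ω)
end

section
/- Suppose a finite dataset of n samples x_1,…,x_n with true labels y_i ∈ {0,1} drawn independently with P(y_i=1) = p(x_i), and selection s_i with s_i=1 ⇒ y_i=1 and P(s_i=1|y_i=1) = e(x_i). Then E[ (1/n)·Σ_i ( h_i·δ₁(f(x_i)) + (1-h_i)·δ₀(f(x_i)) ) ] = (1/n)·Σ_i ( p(x_i)·δ₁(f(x_i)) + (1-p(x_i))·δ₀(f(x_i)) ), where h_i = s_i + (1-s_i)·p(x_i)(1-e(x_i))/(1-p(x_i)e(x_i)), δ₁(f) = -log f, δ₀(f) = -log(1-f), and the expectation is over the joint distribution of (y_i, s_i). -/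
/-!
The corrected label `h(s)` is the conditional mean `E[y | s]`: it is `1` when `s = 1`, and
`p(1-e)/(1-pe) = P(y = 1 | s = 0)` otherwise. Hence `E[h] = E[y] = p`, and since the loss
`h·δ₁ + (1-h)·δ₀` is affine in the label, its expectation is the loss at the label `p`.
-/

open Finset

/-- The joint law of `(y, s)`: `y ~ Bernoulli p`, and `s ~ Bernoulli e` given `y = 1`,
`s = 0` given `y = 0`. -/
def selectionLaw (p e : ℝ) : Bool × Bool → ℝ
  | (true, true) => p * e
  | (true, false) => p * (1 - e)
  | (false, false) => 1 - p
  | (false, true) => 0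

noncomputable def correctedLabel (p e : ℝ) (s : Bool) : ℝ :=
  if s then 1 else p * (1 - e) / (1 - p * e)

lemma sum_selectionLaw (p e : ℝ) : ∑ ys, selectionLaw p e ys = 1 := by
  simp only [Fintype.sum_prod_type, Fintype.sum_bool, selectionLaw]
  ring

lemma sum_selectionLaw_mul_correctedLabel {p e : ℝ} (hpe : p * e ≠ 1) :
    ∑ ys, selectionLaw p e ys * correctedLabel p e ys.2 = p := by
  have hne : 1 - p * e ≠ 0 := sub_ne_zero.mpr hpe.symm
  simp only [Fintype.sum_prod_type, Fintype.sum_bool, selectionLaw, correctedLabel,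
    if_true, Bool.false_eq_true, if_false]
  field_simp
  ring

lemma sum_mul_affine {ι : Type*} [Fintype ι] {w : ι → ℝ} (hw : ∑ i, w i = 1)
    (c : ι → ℝ) (a b : ℝ) :
    ∑ i, w i * (c i * a + (1 - c i) * b) = (∑ i, w i * c i) * a + (1 - ∑ i, w i * c i) * b := by
  calc ∑ i, w i * (c i * a + (1 - c i) * b)
      = ∑ i, (w i * c i * (a - b) + w i * b) := by congr! 1 with i; ring
    _ = (∑ i, w i * c i) * (a - b) + (∑ i, w i) * b := by
        rw [sum_add_distrib, ← sum_mul, ← sum_mul]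
    _ = (∑ i, w i * c i) * a + (1 - ∑ i, w i * c i) * b := by rw [hw]; ring

theorem stmt14_general {X : Type*} (n : ℕ) (x : Fin n → X)
    (p e : X → ℝ)
    (hpe : ∀ i, p (x i) * e (x i) < 1)
    (f : X → ℝ)
    (w : X → Bool × Bool → ℝ)
    (hw11 : ∀ a, w a (true, true) = p a * e a)
    (hw10 : ∀ a, w a (true, false) = p a * (1 - e a))
    (hw00 : ∀ a, w a (false, false) = 1 - p a)
    (hw01 : ∀ a, w a (false, true) = 0)
    (h : X → Bool → ℝ)
    (hh : ∀ a s, h a s = if s then 1 else p a * (1 - e a) / (1 - p a * e a)) :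
    (1 / (n:ℝ)) * ∑ i, ∑ ys : Bool × Bool, w (x i) ys *
        (h (x i) ys.2 * (-Real.log (f (x i)))
          + (1 - h (x i) ys.2) * (-Real.log (1 - f (x i))))
      = (1 / (n:ℝ)) * ∑ i, (p (x i) * (-Real.log (f (x i)))
          + (1 - p (x i)) * (-Real.log (1 - f (x i)))) := by
  congr 1
  refine sum_congr rfl fun i _ => ?_
  have hw : w (x i) = selectionLaw (p (x i)) (e (x i)) := by
    funext ⟨y, s⟩
    cases y <;> cases s <;> simp only [selectionLaw, hw11, hw10, hw00, hw01]
  have hh' : h (x i) = correctedLabel (p (x i)) (e (x i)) := funext (hh (x i))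
  rw [hw, hh', sum_mul_affine (sum_selectionLaw _ _),
    sum_selectionLaw_mul_correctedLabel (hpe i).ne]

/-- finite-sample unbiasedness of the Partial Label Causal Loss.
For each sample `x_i`, the pair `(y_i, s_i)` has joint distribution
`P(y=1,s=1) = p·e`, `P(y=1,s=0) = p(1-e)`, `P(y=0,s=0) = 1-p`, `P(y=0,s=1) = 0`
(samples independent; independence is not needed for the expectation of the sum).
The corrected label is `h_i = s_i + (1-s_i)·p(1-e)/(1-pe)`, which equals `1` when
`s_i = 1`. The expectation over the joint distribution of `(y_i, s_i)` of the averaged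
corrected loss equals the averaged ideal loss with true probabilities `p(x_i)`. -/
theorem stmt14 {X : Type*} (n : ℕ) (hn : 0 < n) (x : Fin n → X)
    (p e : X → ℝ)
    (hp : ∀ i, p (x i) ∈ Set.Icc (0:ℝ) 1) (he : ∀ i, e (x i) ∈ Set.Icc (0:ℝ) 1)
    (hpe : ∀ i, p (x i) * e (x i) < 1)
    (f : X → ℝ) (hf : ∀ i, f (x i) ∈ Set.Ioo (0:ℝ) 1)
    (w : X → Bool × Bool → ℝ)
    (hw11 : ∀ a, w a (true, true) = p a * e a)
    (hw10 : ∀ a, w a (true, false) = p a * (1 - e a))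
    (hw00 : ∀ a, w a (false, false) = 1 - p a)
    (hw01 : ∀ a, w a (false, true) = 0)
    (h : X → Bool → ℝ)
    (hh : ∀ a s, h a s = if s then 1 else p a * (1 - e a) / (1 - p a * e a)) :
    (1 / (n:ℝ)) * ∑ i, ∑ ys : Bool × Bool, w (x i) ys *
        (h (x i) ys.2 * (-Real.log (f (x i)))
          + (1 - h (x i) ys.2) * (-Real.log (1 - f (x i))))
      = (1 / (n:ℝ)) * ∑ i, (p (x i) * (-Real.log (f (x i)))
          + (1 - p (x i)) * (-Real.log (1 - f (x i)))) :=
  stmt14_general n x p e hpe f w hw11 hw10 hw00 hw01 h hh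
end
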